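/- arXiv:1403.1925 — 4 statements merged into one kernel-verified Lean document; each statement's English description precedes it below -/
import Mathlib

section
/- Let f₁ : ℝ → ℝ be differentiable and b ∈ ℝ. If η(t,x) = g₁(t)·x³ + g₂(t)·x² + g₃(t)·x + g₄(t) satisfies the Euler-type ODE η_xx·x² + η_x·x - η = 2·f₁'(t)·x³ - 2·b·f₁(t)·x² for all t ∈ ℝ and all x in a nonempty open interval, then g₁(t) = (1/4)·f₁'(t), g₂(t) = -(2b/3)·f₁(t), and g₄(t) = 0 for all t. -/
theorem stmt_1 (b : ℝ) (f₁ g₁ g₂ g₃ g₄ : ℝ → ℝ) (η : ℝ → ℝ → ℝ)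
    (hf₁ : Differentiable ℝ f₁)
    (hη : ∀ t x : ℝ, η t x = g₁ t * x ^ 3 + g₂ t * x ^ 2 + g₃ t * x + g₄ t)
    (lo hi : ℝ) (hlt : lo < hi)
    (heq : ∀ t : ℝ, ∀ x ∈ Set.Ioo lo hi,
      deriv (deriv (fun y => η t y)) x * x ^ 2
        + deriv (fun y => η t y) x * x - η t x
        = 2 * deriv f₁ t * x ^ 3 - 2 * b * f₁ t * x ^ 2) :
    ∀ t : ℝ, g₁ t = (1 / 4) * deriv f₁ t ∧ g₂ t = -(2 * b / 3) * f₁ t ∧ g₄ t = 0 := by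
  intro t
  have h1 : (fun y => η t y) = fun y => g₁ t * y ^ 3 + g₂ t * y ^ 2 + g₃ t * y + g₄ t :=
    funext (hη t)
  have hd : ∀ x : ℝ, deriv (fun y => η t y) x = 3 * g₁ t * x ^ 2 + 2 * g₂ t * x + g₃ t := by
    intro x
    rw [h1]
    have h : HasDerivAt (fun y => g₁ t * y ^ 3 + g₂ t * y ^ 2 + g₃ t * y + g₄ t)
        (3 * g₁ t * x ^ 2 + 2 * g₂ t * x + g₃ t) x := by
      have := (((hasDerivAt_pow 3 x).const_mul (g₁ t)).add
        ((hasDerivAt_pow 2 x).const_mul (g₂ t))).add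
        (((hasDerivAt_id x).const_mul (g₃ t)).add (hasDerivAt_const x (g₄ t)))
      convert this using 1 <;> (try ext y) <;> simp [id] <;> ring
    exact h.deriv
  have hd2 : ∀ x : ℝ, deriv (deriv (fun y => η t y)) x = 6 * g₁ t * x + 2 * g₂ t := by
    intro x
    rw [funext hd]
    have h : HasDerivAt (fun y : ℝ => 3 * g₁ t * y ^ 2 + 2 * g₂ t * y + g₃ t)
        (6 * g₁ t * x + 2 * g₂ t) x := by
      have := (((hasDerivAt_pow 2 x).const_mul (3 * g₁ t)).add
        ((hasDerivAt_id x).const_mul (2 * g₂ t))).add (hasDerivAt_const x (g₃ t))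
      convert this using 1 <;> (try ext y) <;> simp [id] <;> ring
    exact h.deriv
  set A := 8 * g₁ t - 2 * deriv f₁ t with hA
  set B := 3 * g₂ t + 2 * b * f₁ t with hB
  set D := - g₄ t with hD
  have key : ∀ x ∈ Set.Ioo lo hi, A * x ^ 3 + B * x ^ 2 + D = 0 := by
    intro x hx
    have h := heq t x hx
    rw [hd, hd2, hη t x] at h
    rw [hA, hB, hD]
    nlinarith [h]
  set p : Polynomial ℝ := Polynomial.C A * Polynomial.X ^ 3 +
    Polynomial.C B * Polynomial.X ^ 2 + Polynomial.C D with hp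
  have hpz : p = 0 := by
    apply Polynomial.eq_zero_of_infinite_isRoot
    apply Set.Infinite.mono (s := Set.Ioo lo hi)
    · intro x hx
      simp only [Set.mem_setOf_eq, Polynomial.IsRoot, hp, Polynomial.eval_add,
        Polynomial.eval_mul, Polynomial.eval_pow, Polynomial.eval_C, Polynomial.eval_X]
      exact key x hx
    · exact Set.Ioo_infinite hlt
  have hA0 : A = 0 := by
    have := congrArg (fun q => Polynomial.coeff q 3) hpz
    simpa [hp] using this
  have hB0 : B = 0 := by
    have := congrArg (fun q => Polynomial.coeff q 2) hpz
    simpa [hp] using this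
  have hD0 : D = 0 := by
    have := congrArg (fun q => Polynomial.coeff q 0) hpz
    simpa [hp] using this
  rw [hA] at hA0; rw [hB] at hB0; rw [hD] at hD0
  refine ⟨by linarith, by linarith, by linarith⟩
end

section
/- Let a, b > 0 be real constants and let c₁, c₂, c₃ ∈ ℝ. Define ξ(t,x) = (1/2)c₁x² + c₁t⁴/b - 2c₁a²t²/b - (2b²+9)c₁t²/18 + c₂t/3 + c₃ and η(t,x) = -(2b/3)c₁x² + (c₁(t³-a²t)/b - (2b²+9)c₁t/9 + c₂/3)·x. If ξ and η satisfy the fourth determining equation ξ·(a²-3t²)·x + 2η·(t³-a²t-x) + η·x + η_tt·x³ + (η_x - 2ξ_t)·(t³-a²t-x)·x + b·η_t·x² = 0 for all (t,x) ∈ ℝ², then c₁ = c₂ = c₃ = 0. -/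
/-!
Plugging the candidate into the fourth determining equation turns its left-hand side into a
quartic in `x` with leading coefficient `6 c₁ t / b`, so `c₁ = 0`. Its coefficient of `x` then
reduces to `c₃ (a² - 3 t²) - (2/3) c₂ t³`, a cubic in `t` that vanishes identically, so
`c₂ = c₃ = 0`.
-/

section Quartic

variable {K : Type*}

theorem hasDerivAt_quartic [NontriviallyNormedField K] (α β γ δ ε s : K) :
    HasDerivAt (fun r => α * r ^ 4 + β * r ^ 3 + γ * r ^ 2 + δ * r + ε)
      (4 * α * s ^ 3 + 3 * β * s ^ 2 + 2 * γ * s + δ) s := by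
  have h := (((((hasDerivAt_pow 4 s).const_mul α).add
      ((hasDerivAt_pow 3 s).const_mul β)).add
      ((hasDerivAt_pow 2 s).const_mul γ)).add
      ((hasDerivAt_id s).const_mul δ)).add_const ε
  refine h.congr_deriv ?_
  push_cast
  ring

theorem deriv_eq_of_eq_quartic [NontriviallyNormedField K] {f : K → K} {α β γ δ ε : K}
    (hf : ∀ r, f r = α * r ^ 4 + β * r ^ 3 + γ * r ^ 2 + δ * r + ε) (s : K) :
    deriv f s = 4 * α * s ^ 3 + 3 * β * s ^ 2 + 2 * γ * s + δ := by
  rw [funext hf]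
  exact (hasDerivAt_quartic α β γ δ ε s).deriv

theorem quartic_coeffs_eq_zero [Field K] [CharZero K] {A B C D E : K}
    (h : ∀ x : K, A * x ^ 4 + B * x ^ 3 + C * x ^ 2 + D * x + E = 0) :
    A = 0 ∧ B = 0 ∧ C = 0 ∧ D = 0 ∧ E = 0 := by
  have h₀ := h 0
  have h₁ := h 1
  have h₂ := h (-1)
  have h₃ := h 2
  have h₄ := h (-2)
  refine ⟨?_, ?_, ?_, ?_, ?_⟩
  · linear_combination (h₃ + h₄ - 4 * h₁ - 4 * h₂ + 6 * h₀) / 24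
  · linear_combination (h₃ - h₄ - 2 * h₁ + 2 * h₂) / 12
  · linear_combination (-h₃ - h₄ + 16 * h₁ + 16 * h₂ - 30 * h₀) / 24
  · linear_combination (-h₃ + h₄ + 8 * h₁ - 8 * h₂) / 12
  · linear_combination h₀

end Quartic

section Candidate

variable (a b c₁ c₂ c₃ : ℝ)

noncomputable def candidateXi (t x : ℝ) : ℝ :=
  (1 / 2) * c₁ * x ^ 2 + c₁ * t ^ 4 / b
    - 2 * c₁ * a ^ 2 * t ^ 2 / b - (2 * b ^ 2 + 9) * c₁ * t ^ 2 / 18 + c₂ * t / 3 + c₃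

noncomputable def candidateEta (t x : ℝ) : ℝ :=
  -(2 * b / 3) * c₁ * x ^ 2
    + (c₁ * (t ^ 3 - a ^ 2 * t) / b - (2 * b ^ 2 + 9) * c₁ * t / 9 + c₂ / 3) * x

noncomputable def fourthDetermining (ξ η : ℝ → ℝ → ℝ) (t x : ℝ) : ℝ :=
  ξ t x * (a ^ 2 - 3 * t ^ 2) * x
    + 2 * η t x * (t ^ 3 - a ^ 2 * t - x)
    + η t x * x
    + deriv (fun s => deriv (fun r => η r x) s) t * x ^ 3
    + (deriv (fun y => η t y) x - 2 * deriv (fun s => ξ s x) t)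
        * (t ^ 3 - a ^ 2 * t - x) * x
    + b * deriv (fun s => η s x) t * x ^ 2

variable {a b c₁ c₂ c₃}

theorem deriv_candidateXi_fst (t x : ℝ) :
    deriv (fun s => candidateXi a b c₁ c₂ c₃ s x) t
      = 4 * c₁ * t ^ 3 / b - 4 * c₁ * a ^ 2 * t / b - (2 * b ^ 2 + 9) * c₁ * t / 9 + c₂ / 3 := by
  rw [deriv_eq_of_eq_quartic (α := c₁ / b) (β := 0)
    (γ := -(2 * c₁ * a ^ 2 / b) - (2 * b ^ 2 + 9) * c₁ / 18) (δ := c₂ / 3)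
    (ε := (1 / 2) * c₁ * x ^ 2 + c₃) (fun s => by unfold candidateXi; ring)]
  ring

theorem deriv_candidateEta_fst (t x : ℝ) :
    deriv (fun s => candidateEta a b c₁ c₂ s x) t
      = (c₁ * (3 * t ^ 2 - a ^ 2) / b - (2 * b ^ 2 + 9) * c₁ / 9) * x := by
  rw [deriv_eq_of_eq_quartic (α := 0) (β := c₁ * x / b) (γ := 0)
    (δ := (-(c₁ * a ^ 2 / b) - (2 * b ^ 2 + 9) * c₁ / 9) * x)
    (ε := -(2 * b / 3) * c₁ * x ^ 2 + c₂ / 3 * x) (fun s => by unfold candidateEta; ring)]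
  ring

theorem deriv_deriv_candidateEta_fst (t x : ℝ) :
    deriv (fun s => deriv (fun r => candidateEta a b c₁ c₂ r x) s) t = 6 * c₁ * t / b * x := by
  simp only [deriv_candidateEta_fst]
  rw [deriv_eq_of_eq_quartic (α := 0) (β := 0) (γ := 3 * c₁ * x / b) (δ := 0)
    (ε := (-(c₁ * a ^ 2 / b) - (2 * b ^ 2 + 9) * c₁ / 9) * x) (fun s => by ring)]
  ring

theorem deriv_candidateEta_snd (t x : ℝ) :
    deriv (fun y => candidateEta a b c₁ c₂ t y) x
      = -(4 * b / 3) * c₁ * x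
        + (c₁ * (t ^ 3 - a ^ 2 * t) / b - (2 * b ^ 2 + 9) * c₁ * t / 9 + c₂ / 3) := by
  rw [deriv_eq_of_eq_quartic (α := 0) (β := 0) (γ := -(2 * b / 3) * c₁)
    (δ := c₁ * (t ^ 3 - a ^ 2 * t) / b - (2 * b ^ 2 + 9) * c₁ * t / 9 + c₂ / 3) (ε := 0)
    (fun y => by unfold candidateEta; ring)]
  ring

theorem fourthDetermining_candidate (hb : b ≠ 0) (t x : ℝ) :
    fourthDetermining a b (candidateXi a b c₁ c₂ c₃) (candidateEta a b c₁ c₂) t x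
      = 6 * c₁ * t / b * x ^ 4
        + c₁ * (3 / 2 * t ^ 2 + b - 2 * b ^ 3 / 9 - a ^ 2 / 2) * x ^ 3
        + c₁ * (t ^ 3 - a ^ 2 * t) * (6 / b - 8 * b / 3) * x ^ 2
        + (c₃ * (a ^ 2 - 3 * t ^ 2) - 2 / 3 * c₂ * t ^ 3
          + c₁ * (t ^ 4 / 2 - 8 * t ^ 6 / b + b ^ 2 * t ^ 4 / 9 + a ^ 2 * t ^ 2 / 2
            + 17 * a ^ 2 * t ^ 4 / b + a ^ 2 * b ^ 2 * t ^ 2 / 9 - 7 * a ^ 4 * t ^ 2 / b)) * x := by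
  rw [fourthDetermining, deriv_deriv_candidateEta_fst, deriv_candidateEta_snd,
    deriv_candidateXi_fst, deriv_candidateEta_fst]
  unfold candidateXi candidateEta
  field_simp
  ring

end Candidate

theorem stmt_5_general (a b c₁ c₂ c₃ : ℝ) (hb : 0 < b)
    (ξ η : ℝ → ℝ → ℝ)
    (hξ : ∀ t x : ℝ, ξ t x = (1 / 2) * c₁ * x ^ 2 + c₁ * t ^ 4 / b
      - 2 * c₁ * a ^ 2 * t ^ 2 / b - (2 * b ^ 2 + 9) * c₁ * t ^ 2 / 18 + c₂ * t / 3 + c₃)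
    (hη : ∀ t x : ℝ, η t x = -(2 * b / 3) * c₁ * x ^ 2
      + (c₁ * (t ^ 3 - a ^ 2 * t) / b - (2 * b ^ 2 + 9) * c₁ * t / 9 + c₂ / 3) * x)
    (heq : ∀ t x : ℝ,
      ξ t x * (a ^ 2 - 3 * t ^ 2) * x
        + 2 * η t x * (t ^ 3 - a ^ 2 * t - x)
        + η t x * x
        + deriv (fun s => deriv (fun r => η r x) s) t * x ^ 3
        + (deriv (fun y => η t y) x - 2 * deriv (fun s => ξ s x) t)
            * (t ^ 3 - a ^ 2 * t - x) * x
        + b * deriv (fun s => η s x) t * x ^ 2 = 0) :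
    c₁ = 0 ∧ c₂ = 0 ∧ c₃ = 0 := by
  obtain rfl : ξ = candidateXi a b c₁ c₂ c₃ := funext₂ hξ
  obtain rfl : η = candidateEta a b c₁ c₂ := funext₂ hη
  have hcoeffs (t : ℝ) := quartic_coeffs_eq_zero fun x =>
    (add_zero _).trans ((fourthDetermining_candidate hb.ne' t x).symm.trans (heq t x))
  have hc₁ : c₁ = 0 := by
    simpa [hb.ne'] using (hcoeffs 1).1
  subst hc₁
  obtain ⟨-, hc₂, hc₃, -, -⟩ := quartic_coeffs_eq_zero (A := 0) (B := -(2 / 3) * c₂)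
    (C := -3 * c₃) (D := 0) (E := a ^ 2 * c₃) fun t => by
      linear_combination (hcoeffs t).2.2.2.1
  exact ⟨rfl, by linarith, by linarith⟩

theorem stmt_5 (a b c₁ c₂ c₃ : ℝ) (ha : 0 < a) (hb : 0 < b)
    (ξ η : ℝ → ℝ → ℝ)
    (hξ : ∀ t x : ℝ, ξ t x = (1 / 2) * c₁ * x ^ 2 + c₁ * t ^ 4 / b
      - 2 * c₁ * a ^ 2 * t ^ 2 / b - (2 * b ^ 2 + 9) * c₁ * t ^ 2 / 18 + c₂ * t / 3 + c₃)
    (hη : ∀ t x : ℝ, η t x = -(2 * b / 3) * c₁ * x ^ 2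
      + (c₁ * (t ^ 3 - a ^ 2 * t) / b - (2 * b ^ 2 + 9) * c₁ * t / 9 + c₂ / 3) * x)
    (heq : ∀ t x : ℝ,
      ξ t x * (a ^ 2 - 3 * t ^ 2) * x
        + 2 * η t x * (t ^ 3 - a ^ 2 * t - x)
        + η t x * x
        + deriv (fun s => deriv (fun r => η r x) s) t * x ^ 3
        + (deriv (fun y => η t y) x - 2 * deriv (fun s => ξ s x) t)
            * (t ^ 3 - a ^ 2 * t - x) * x
        + b * deriv (fun s => η s x) t * x ^ 2 = 0) :
    c₁ = 0 ∧ c₂ = 0 ∧ c₃ = 0 :=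
  stmt_5_general a b c₁ c₂ c₃ hb ξ η hξ hη heq
end

section
/- Let a, b > 0. Suppose ξ, η : ℝ × ℝ → ℝ are real-analytic functions satisfying all four determining equations: (i) -bxη + b(η_x - ξ_t)x² - bx²(η_x - 2ξ_t) + 2η_t x² + (2η_tx - ξ_tt)x³ - 3ξ_x(t³ - a²t - x)x = 0; (ii) 2bξ_x x² - ηx + 2(η_x - ξ_t)x² + (η_xx - 2ξ_tx)x³ - (η_x - 2ξ_t)x² = 0; (iii) -2ξ_x x² - ξ_xx x³ + 3ξ_x x² = 0; (iv) ξ(a² - 3t²)x + 2η(t³ - a²t - x) + ηx + η_tt x³ + (η_x - 2ξ_t)(t³ - a²t - x)x + bη_t x² = 0, for all (t,x) ∈ ℝ². Then ξ ≡ 0 and η ≡ 0. -/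
/-!
Equation (iii) says that `ξ_x / x` does not depend on `x`, so `ξ = A(t) + C(t) x²`. Equation (ii)
then becomes the inhomogeneous Euler equation `x² η_xx + x η_x - η = -4bC x² + 4C' x³` in `x`; its
homogeneous solutions are `x` and `1/x`, and regularity at `x = 0` leaves
`η = B(t) x - (4b/3) C x² + (C'/2) x³`. In (i) the coefficient of `x⁴` is then `-(15/2) b C'`,
so `C` is a constant `c`. In (iv) the coefficients of `x⁴, x³, x², x` give `B'' = 0`,
`c (a² - 3t²) + 4bc + b B' = 0`, `A' = B + (8b/3) c (t³ - a²t)` and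
`A (a² - 3t²) + (3B - 2A') (t³ - a²t) = 0`, whose only solution is `A = B = c = 0`.
-/

open scoped ContDiff

open Polynomial in
theorem eq_zero_of_forall_sum_mul_pow_eq_zero {R : Type*} [CommRing R] [IsDomain R] [Infinite R]
    {n : ℕ} {c : Fin n → R} (h : ∀ x : R, ∑ i, c i * x ^ (i : ℕ) = 0) : c = 0 := by
  have hp : ∑ i, C (c i) * X ^ (i : ℕ) = 0 :=
    Polynomial.funext fun x => by simpa [eval_finsetSum] using h x
  funext j
  simpa [finsetSum_coeff, coeff_C_mul_X_pow, Fin.val_inj] using congrArg (coeff · j) hp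

theorem eq_zero_of_pow_mul_eq_zero {u : ℝ → ℝ} (hu : Continuous u) (n : ℕ)
    (h : ∀ x, x ^ n * u x = 0) (x : ℝ) : u x = 0 :=
  congrFun (hu.ext_on (dense_compl_singleton 0) continuous_const fun y hy =>
    (mul_eq_zero.1 (h y)).resolve_left (pow_ne_zero n hy)) x

theorem eq_add_mul_of_deriv_eq {f : ℝ → ℝ} (hf : Differentiable ℝ f) {k : ℝ}
    (h : ∀ t, deriv f t = k) (t : ℝ) : f t = f 0 + k * t := by
  have := is_const_of_deriv_eq_zero (f := fun t => f t - k * t) (by fun_prop)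
    (fun t => by simp (disch := fun_prop) [h]) t 0
  linarith

theorem eq_deriv_zero_mul_of_eq_mul_deriv {g : ℝ → ℝ} (hg : ContDiff ℝ 2 g)
    (h : ∀ x, g x = x * deriv g x) (x : ℝ) : g x = deriv g 0 * x := by
  have hg' : Differentiable ℝ (deriv g) := hg.differentiable_deriv_two
  have hg'' : ∀ x, deriv (deriv g) x = 0 := by
    refine eq_zero_of_pow_mul_eq_zero (by fun_prop) 1 fun x => ?_
    have hd : HasDerivAt (fun y => y * deriv g y) (1 * deriv g x + x * deriv (deriv g) x) x :=
      (hasDerivAt_id' x).mul (hg' x).hasDerivAt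
    rw [show (fun y => y * deriv g y) = g from funext fun y => (h y).symm] at hd
    linarith [hd.deriv]
  rw [h x, eq_add_mul_of_deriv_eq hg' hg'' x]
  ring

theorem eq_deriv_zero_mul_of_euler_eq_zero {h : ℝ → ℝ} (hh : ContDiff ℝ 2 h)
    (he : ∀ x, x ^ 2 * deriv (deriv h) x + x * deriv h x - h x = 0) (x : ℝ) :
    h x = deriv h 0 * x := by
  have hh₁ : Differentiable ℝ h := hh.differentiable (by decide)
  have hh₂ : Differentiable ℝ (deriv h) := hh.differentiable_deriv_two
  -- `(x (x h' - h))' = x² h'' + x h' - h`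
  have hu : ∀ x, x ^ 1 * (x * deriv h x - h x) = 0 := fun x => by
    have := eq_add_mul_of_deriv_eq (f := fun x => x * (x * deriv h x - h x))
      (by fun_prop) (k := 0)
      (fun x => by
        simp (disch := fun_prop) only [deriv_fun_mul, deriv_fun_sub, deriv_id'']
        linear_combination he x) x
    simpa using this
  refine eq_deriv_zero_mul_of_eq_mul_deriv hh (fun x => ?_) x
  linarith [eq_zero_of_pow_mul_eq_zero (by fun_prop : Differentiable ℝ _).continuous 1 hu x]

theorem eq_add_sub_mul_sq {f : ℝ → ℝ} (hf : ContDiff ℝ 3 f)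
    (h : ∀ x, x ^ 2 * (deriv f x - x * deriv (deriv f) x) = 0) (x : ℝ) :
    f x = f 0 + (f 1 - f 0) * x ^ 2 := by
  have hf₁ : Differentiable ℝ f := hf.differentiable (by decide)
  have hf₂ : ContDiff ℝ 2 (deriv f) := hf.deriv'
  have hf₃ : Differentiable ℝ (deriv f) := hf₂.differentiable (by decide)
  have hf₄ : Differentiable ℝ (deriv (deriv f)) := hf₂.differentiable_deriv_two
  have hlin := eq_deriv_zero_mul_of_eq_mul_deriv hf₂ fun x => by
    linarith [eq_zero_of_pow_mul_eq_zero (by fun_prop : Differentiable ℝ _).continuous 2 h x]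
  have hquad (x : ℝ) : f x = f 0 + deriv (deriv f) 0 / 2 * x ^ 2 := by
    have := eq_add_mul_of_deriv_eq (f := fun x => f x - deriv (deriv f) 0 / 2 * x ^ 2)
      (by fun_prop) (k := 0) (fun x => by
        simp (disch := fun_prop) only [deriv_fun_sub, deriv_fun_mul, deriv_const', deriv_fun_pow,
          deriv_id'', Nat.cast_ofNat, hlin]
        ring) x
    linarith
  rw [hquad x, hquad 1]
  ring

theorem eq_cubic_of_euler_eq {g : ℝ → ℝ} (hg : ContDiff ℝ 2 g) (p q : ℝ)
    (h : ∀ x, x * (x ^ 2 * deriv (deriv g) x + x * deriv g x - g x + p * x ^ 2 + q * x ^ 3) = 0)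
    (x : ℝ) : g x = (g 1 + p / 3 + q / 8) * x - p / 3 * x ^ 2 - q / 8 * x ^ 3 := by
  have hg₁ : Differentiable ℝ g := hg.differentiable (by decide)
  have hg₂ : Differentiable ℝ (deriv g) := hg.differentiable_deriv_two
  -- The Euler operator maps `x ^ k` to `(k ^ 2 - 1) x ^ k`.
  set k := fun x => g x + p / 3 * x ^ 2 + q / 8 * x ^ 3 with hk
  have hk₁ : deriv k = fun x => deriv g x + 2 * p / 3 * x + 3 * q / 8 * x ^ 2 := by
    funext x
    simp (disch := fun_prop) only [hk, deriv_fun_add, deriv_fun_mul, deriv_div_const, deriv_const',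
      deriv_fun_pow, deriv_id'', Nat.cast_ofNat]
    ring
  have hk₂ : deriv (deriv k) = fun x => deriv (deriv g) x + 2 * p / 3 + 3 * q / 4 * x := by
    funext x
    simp (disch := fun_prop) only [hk₁, deriv_fun_add, deriv_const_mul_id', deriv_fun_mul,
      deriv_div_const, deriv_const', deriv_fun_pow, deriv_id'', Nat.cast_ofNat]
    ring
  have he : ∀ x, x ^ 2 * deriv (deriv g) x + x * deriv g x - g x + p * x ^ 2 + q * x ^ 3 = 0 :=
    eq_zero_of_pow_mul_eq_zero (by have := hg₂.continuous; fun_prop) 1 (by simpa using h)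
  have hke := eq_deriv_zero_mul_of_euler_eq_zero (h := k) (by fun_prop) fun x => by
    rw [hk₂, hk₁]
    linear_combination he x
  have h₁ := hke 1
  have hx := hke x
  simp only [hk] at h₁ hx
  linear_combination hx - x * h₁

def DeterminingEq₁ (a b : ℝ) (ξ η : ℝ × ℝ → ℝ) : Prop :=
  ∀ t x : ℝ,
      -(b * x * η (t, x))
        + b * (deriv (fun y => η (t, y)) x - deriv (fun s => ξ (s, x)) t) * x ^ 2
        - b * x ^ 2 * (deriv (fun y => η (t, y)) x - 2 * deriv (fun s => ξ (s, x)) t)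
        + 2 * deriv (fun s => η (s, x)) t * x ^ 2
        + (2 * deriv (fun s => deriv (fun y => η (s, y)) x) t
            - deriv (fun s => deriv (fun r => ξ (r, x)) s) t) * x ^ 3
        - 3 * deriv (fun y => ξ (t, y)) x * (t ^ 3 - a ^ 2 * t - x) * x = 0

def DeterminingEq₂ (b : ℝ) (ξ η : ℝ × ℝ → ℝ) : Prop :=
  ∀ t x : ℝ,
      2 * b * deriv (fun y => ξ (t, y)) x * x ^ 2
        - η (t, x) * x
        + 2 * (deriv (fun y => η (t, y)) x - deriv (fun s => ξ (s, x)) t) * x ^ 2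
        + (deriv (deriv (fun y => η (t, y))) x
            - 2 * deriv (fun s => deriv (fun y => ξ (s, y)) x) t) * x ^ 3
        - (deriv (fun y => η (t, y)) x - 2 * deriv (fun s => ξ (s, x)) t) * x ^ 2 = 0

def DeterminingEq₃ (ξ : ℝ × ℝ → ℝ) : Prop :=
  ∀ t x : ℝ,
      -2 * deriv (fun y => ξ (t, y)) x * x ^ 2
        - deriv (deriv (fun y => ξ (t, y))) x * x ^ 3
        + 3 * deriv (fun y => ξ (t, y)) x * x ^ 2 = 0

def DeterminingEq₄ (a b : ℝ) (ξ η : ℝ × ℝ → ℝ) : Prop :=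
  ∀ t x : ℝ,
      ξ (t, x) * (a ^ 2 - 3 * t ^ 2) * x
        + 2 * η (t, x) * (t ^ 3 - a ^ 2 * t - x)
        + η (t, x) * x
        + deriv (fun s => deriv (fun r => η (r, x)) s) t * x ^ 3
        + (deriv (fun y => η (t, y)) x - 2 * deriv (fun s => ξ (s, x)) t)
            * (t ^ 3 - a ^ 2 * t - x) * x
        + b * deriv (fun s => η (s, x)) t * x ^ 2 = 0

theorem exists_eq_quadratic_of_determiningEq₃ {ξ : ℝ × ℝ → ℝ} (hξ : ContDiff ℝ ∞ ξ)
    (h₃ : DeterminingEq₃ ξ) : ∃ A C : ℝ → ℝ, ContDiff ℝ ∞ A ∧ ContDiff ℝ ∞ C ∧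
      ξ = fun p => A p.1 + C p.1 * p.2 ^ 2 := by
  refine ⟨fun s => ξ (s, 0), fun s => ξ (s, 1) - ξ (s, 0), by fun_prop, by fun_prop,
    funext fun (t, x) => eq_add_sub_mul_sq (f := fun y => ξ (t, y)) ?_ (fun x => ?_) x⟩
  · exact (show ContDiff ℝ ∞ fun y => ξ (t, y) by fun_prop).of_le (by decide)
  · linear_combination h₃ t x

theorem exists_eq_cubic_of_determiningEq₂ {b : ℝ} {A C : ℝ → ℝ} {η : ℝ × ℝ → ℝ}
    (hA : ContDiff ℝ ∞ A) (hC : ContDiff ℝ ∞ C) (hη : ContDiff ℝ ∞ η)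
    (h₂ : DeterminingEq₂ b (fun p => A p.1 + C p.1 * p.2 ^ 2) η) :
    ∃ B : ℝ → ℝ, ContDiff ℝ ∞ B ∧
      η = fun p => B p.1 * p.2 - 4 * b / 3 * C p.1 * p.2 ^ 2 + deriv C p.1 / 2 * p.2 ^ 3 := by
  have hA₁ : Differentiable ℝ A := hA.differentiable (by decide)
  have hC₁ : Differentiable ℝ C := hC.differentiable (by decide)
  have hC' : ContDiff ℝ ∞ (deriv C) := (contDiff_infty_iff_deriv.1 hC).2
  refine ⟨fun s => η (s, 1) + 4 * b / 3 * C s - deriv C s / 2, by fun_prop, funext fun p => ?_⟩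
  have := eq_cubic_of_euler_eq (g := fun y => η (p.1, y))
    ((show ContDiff ℝ ∞ fun y => η (p.1, y) by fun_prop).of_le (by decide))
    (4 * b * C p.1) (-4 * deriv C p.1) (fun x => by
      have := h₂ p.1 x
      simp (disch := fun_prop) only [deriv_fun_add, deriv_fun_mul, deriv_const', deriv_fun_pow,
        deriv_id'', Nat.cast_ofNat] at this
      linear_combination this) p.2
  rw [this]
  ring

theorem exists_eq_const_of_determiningEq₁ {a b : ℝ} (hb : b ≠ 0) {A B C : ℝ → ℝ}
    (hA : ContDiff ℝ ∞ A) (hB : ContDiff ℝ ∞ B) (hC : ContDiff ℝ ∞ C)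
    (h₁ : DeterminingEq₁ a b (fun p => A p.1 + C p.1 * p.2 ^ 2)
      (fun p => B p.1 * p.2 - 4 * b / 3 * C p.1 * p.2 ^ 2 + deriv C p.1 / 2 * p.2 ^ 3)) :
    ∃ c : ℝ, C = fun _ => c := by
  have hA₁ : Differentiable ℝ A := hA.differentiable (by decide)
  have hA₂ : Differentiable ℝ (deriv A) := (hA.iterate_deriv 1).differentiable (by decide)
  have hB₁ : Differentiable ℝ B := hB.differentiable (by decide)
  have hC₁ : Differentiable ℝ C := hC.differentiable (by decide)
  have hC₂ : Differentiable ℝ (deriv C) := (hC.iterate_deriv 1).differentiable (by decide)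
  have hC₃ : Differentiable ℝ (deriv (deriv C)) := (hC.iterate_deriv 2).differentiable (by decide)
  have hC' (t : ℝ) : deriv C t = 0 := by
    have hcoef := eq_zero_of_forall_sum_mul_pow_eq_zero (c := ![0, 0,
        b * (deriv A t - B t) - 6 * C t * (t ^ 3 - a ^ 2 * t),
        4 * b ^ 2 / 3 * C t + 4 * deriv B t - deriv (deriv A) t + 6 * C t,
        -15 / 2 * b * deriv C t, 3 * deriv (deriv C) t]) fun x => by
      have := h₁ t x
      simp (disch := fun_prop) only [deriv_fun_add, deriv_fun_sub, deriv_fun_mul, deriv_const',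
        deriv_const_mul_id', deriv_div_const, deriv_fun_pow, deriv_id'', Nat.cast_ofNat] at this
      simp only [Fin.sum_univ_succ, Fin.sum_univ_zero, Matrix.cons_val_zero, Matrix.cons_val_succ,
        Fin.val_zero, Fin.val_succ]
      linear_combination this
    simpa [hb] using congrFun hcoef 4
  exact ⟨C 0, funext fun t => by simpa using eq_add_mul_of_deriv_eq hC₁ hC' t⟩

theorem eq_zero_of_determiningEq₄ {a b : ℝ} (ha : a ≠ 0) (hb : b ≠ 0) {A B : ℝ → ℝ} {c : ℝ}
    (hA : ContDiff ℝ ∞ A) (hB : ContDiff ℝ ∞ B)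
    (h₄ : DeterminingEq₄ a b (fun p => A p.1 + c * p.2 ^ 2)
      (fun p => B p.1 * p.2 - 4 * b / 3 * c * p.2 ^ 2)) :
    A = 0 ∧ B = 0 ∧ c = 0 := by
  have hA₁ : Differentiable ℝ A := hA.differentiable (by decide)
  have hB₁ : Differentiable ℝ B := hB.differentiable (by decide)
  have hB₂ : Differentiable ℝ (deriv B) := (hB.iterate_deriv 1).differentiable (by decide)
  have hcoef (t : ℝ) := eq_zero_of_forall_sum_mul_pow_eq_zero (c := ![0,
      A t * (a ^ 2 - 3 * t ^ 2) + (3 * B t - 2 * deriv A t) * (t ^ 3 - a ^ 2 * t),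
      2 * deriv A t - 2 * B t - 16 * b / 3 * c * (t ^ 3 - a ^ 2 * t),
      c * (a ^ 2 - 3 * t ^ 2) + 4 * b * c + b * deriv B t,
      deriv (deriv B) t]) fun x => by
    have := h₄ t x
    simp (disch := fun_prop) only [deriv_fun_add, deriv_fun_sub, deriv_fun_mul, deriv_const',
      deriv_const_mul_id', deriv_div_const, deriv_fun_pow, deriv_id'', Nat.cast_ofNat] at this
    simp only [Fin.sum_univ_succ, Fin.sum_univ_zero, Matrix.cons_val_zero, Matrix.cons_val_succ,
      Fin.val_zero, Fin.val_succ]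
    linear_combination this
  have hx₁ (t : ℝ) := congrFun (hcoef t) 1
  have hx₂ (t : ℝ) := congrFun (hcoef t) 2
  have hx₃ (t : ℝ) := congrFun (hcoef t) 3
  have hx₄ (t : ℝ) := congrFun (hcoef t) 4
  simp only [Fin.isValue, Matrix.cons_val, Pi.zero_apply] at hx₁ hx₂ hx₃ hx₄
  have hB' (t : ℝ) : deriv B t = deriv B 0 := by simpa using eq_add_mul_of_deriv_eq hB₂ hx₄ t
  have hc : c = 0 := by
    have := hx₃ 1
    rw [hB' 1] at this
    linarith [hx₃ 0]
  subst hc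
  have hB'0 : deriv B 0 = 0 := by simpa [hb] using hx₃ 0
  have hBc (t : ℝ) : B t = B 0 := by
    simpa using eq_add_mul_of_deriv_eq hB₁ (fun t => (hB' t).trans hB'0) t
  have hA' (t : ℝ) : deriv A t = B 0 := by linarith [hx₂ t, hBc t]
  have hA (t : ℝ) : A t = A 0 + B 0 * t := eq_add_mul_of_deriv_eq hA₁ hA' t
  have hA0 : A 0 = 0 := by simpa [ha] using hx₁ 0
  have hB0 : B 0 = 0 := by
    have := hx₁ 1
    rw [hA 1, hBc 1, hA' 1, hA0] at this
    linarith
  refine ⟨funext fun t => ?_, funext fun t => ?_, rfl⟩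
  · simp [hA t, hA0, hB0]
  · simp [hBc t, hB0]

theorem stmt_6 (a b : ℝ) (ha : 0 < a) (hb : 0 < b)
    (ξ η : ℝ × ℝ → ℝ)
    (hξa : ∀ p : ℝ × ℝ, AnalyticAt ℝ ξ p)
    (hηa : ∀ p : ℝ × ℝ, AnalyticAt ℝ η p)
    (h1 : ∀ t x : ℝ,
      -(b * x * η (t, x))
        + b * (deriv (fun y => η (t, y)) x - deriv (fun s => ξ (s, x)) t) * x ^ 2
        - b * x ^ 2 * (deriv (fun y => η (t, y)) x - 2 * deriv (fun s => ξ (s, x)) t)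
        + 2 * deriv (fun s => η (s, x)) t * x ^ 2
        + (2 * deriv (fun s => deriv (fun y => η (s, y)) x) t
            - deriv (fun s => deriv (fun r => ξ (r, x)) s) t) * x ^ 3
        - 3 * deriv (fun y => ξ (t, y)) x * (t ^ 3 - a ^ 2 * t - x) * x = 0)
    (h2 : ∀ t x : ℝ,
      2 * b * deriv (fun y => ξ (t, y)) x * x ^ 2
        - η (t, x) * x
        + 2 * (deriv (fun y => η (t, y)) x - deriv (fun s => ξ (s, x)) t) * x ^ 2
        + (deriv (deriv (fun y => η (t, y))) x
            - 2 * deriv (fun s => deriv (fun y => ξ (s, y)) x) t) * x ^ 3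
        - (deriv (fun y => η (t, y)) x - 2 * deriv (fun s => ξ (s, x)) t) * x ^ 2 = 0)
    (h3 : ∀ t x : ℝ,
      -2 * deriv (fun y => ξ (t, y)) x * x ^ 2
        - deriv (deriv (fun y => ξ (t, y))) x * x ^ 3
        + 3 * deriv (fun y => ξ (t, y)) x * x ^ 2 = 0)
    (h4 : ∀ t x : ℝ,
      ξ (t, x) * (a ^ 2 - 3 * t ^ 2) * x
        + 2 * η (t, x) * (t ^ 3 - a ^ 2 * t - x)
        + η (t, x) * x
        + deriv (fun s => deriv (fun r => η (r, x)) s) t * x ^ 3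
        + (deriv (fun y => η (t, y)) x - 2 * deriv (fun s => ξ (s, x)) t)
            * (t ^ 3 - a ^ 2 * t - x) * x
        + b * deriv (fun s => η (s, x)) t * x ^ 2 = 0) :
    (∀ t x : ℝ, ξ (t, x) = 0) ∧ (∀ t x : ℝ, η (t, x) = 0) := by
  have hξ : ContDiff ℝ ∞ ξ := AnalyticOnNhd.contDiff fun p _ => hξa p
  have hη : ContDiff ℝ ∞ η := AnalyticOnNhd.contDiff fun p _ => hηa p
  obtain ⟨A, C, hA, hC, rfl⟩ := exists_eq_quadratic_of_determiningEq₃ hξ h3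
  obtain ⟨B, hB, rfl⟩ := exists_eq_cubic_of_determiningEq₂ hA hC hη h2
  obtain ⟨c, rfl⟩ := exists_eq_const_of_determiningEq₁ hb.ne' hA hB hC h1
  simp only [deriv_const', zero_div, zero_mul, add_zero] at h4
  obtain ⟨rfl, rfl, rfl⟩ := eq_zero_of_determiningEq₄ ha.ne' hb.ne' hA hB h4
  simp
end

section
/- Let a, b > 0. There is no nonzero pair of polynomial functions ξ(t,x) = (1/2)c₁x² + c₁t⁴/b - 2c₁a²t²/b - (2b²+9)c₁t²/18 + c₂t/3 + c₃ and η(t,x) = -(2b/3)c₁x² + (c₁(t³-a²t)/b - (2b²+9)c₁t/9 + c₂/3)x with (c₁,c₂,c₃) ≠ (0,0,0) such that the polynomial identity ξ(a²-3t²)x + 2η(t³-a²t-x) + ηx + ∂²η/∂t²·x³ + (∂η/∂x - 2∂ξ/∂t)(t³-a²t-x)x + b·∂η/∂t·x² = 0 holds identically in (t,x) ∈ ℝ². -/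
/-!
Generators of the form `ξ = m x² + ξ₀(t)`, `η = e x² + η₁(t) x` turn the left-hand side of
the determining equation into `x` times a cubic in `x`; its leading coefficient is `η₁''` and
its lowest one is `ξ₀ (a² - 3t²) + (3η₁ - 2ξ₀') (t³ - a²t)`. For the candidate generators
`η₁'' = 6c₁t/b`, so `c₁ = 0`, after which the lowest coefficient is
`c₃ (a² - 3t²) - 2c₂t³/3`, forcing `c₂ = c₃ = 0`.
-/

theorem coeffs_eq_zero_of_forall_mul_cubic_eq_zero {K : Type*} [Field K] [CharZero K]
    {A B C D : K} (h : ∀ x : K, x * (A + B * x + C * x ^ 2 + D * x ^ 3) = 0) :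
    A = 0 ∧ B = 0 ∧ C = 0 ∧ D = 0 := by
  have h₁ := h 1
  have h₂ := h (-1)
  have h₃ := h 2
  have h₄ := h (-2)
  refine ⟨?_, ?_, ?_, ?_⟩
  · linear_combination (2 / 3 : K) * h₁ - 2 / 3 * h₂ - 1 / 12 * h₃ + 1 / 12 * h₄
  · linear_combination (2 / 3 : K) * h₁ + 2 / 3 * h₂ - 1 / 24 * h₃ - 1 / 24 * h₄
  · linear_combination (-1 / 6 : K) * h₁ + 1 / 6 * h₂ + 1 / 12 * h₃ - 1 / 12 * h₄
  · linear_combination (-1 / 6 : K) * h₁ - 1 / 6 * h₂ + 1 / 24 * h₃ + 1 / 24 * h₄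

noncomputable def determiningExpr (a b : ℝ) (ξ η : ℝ → ℝ → ℝ) (t x : ℝ) : ℝ :=
  ξ t x * (a ^ 2 - 3 * t ^ 2) * x
    + 2 * η t x * (t ^ 3 - a ^ 2 * t - x)
    + η t x * x
    + deriv (fun s => deriv (fun r => η r x) s) t * x ^ 3
    + (deriv (fun y => η t y) x - 2 * deriv (fun s => ξ s x) t)
        * (t ^ 3 - a ^ 2 * t - x) * x
    + b * deriv (fun s => η s x) t * x ^ 2

theorem determiningExpr_quadratic_ansatz (a b m e : ℝ) (ξ₀ η₁ : ℝ → ℝ) (t x : ℝ) :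
    determiningExpr a b (fun t x => m * x ^ 2 + ξ₀ t) (fun t x => e * x ^ 2 + η₁ t * x) t x =
      x * ((ξ₀ t * (a ^ 2 - 3 * t ^ 2) + (3 * η₁ t - 2 * deriv ξ₀ t) * (t ^ 3 - a ^ 2 * t))
        + (4 * e * (t ^ 3 - a ^ 2 * t) - 2 * η₁ t + 2 * deriv ξ₀ t) * x
        + (m * (a ^ 2 - 3 * t ^ 2) - 3 * e + b * deriv η₁ t) * x ^ 2
        + deriv (deriv η₁) t * x ^ 3) := by
  have hη_x : deriv (fun y => e * y ^ 2 + η₁ t * y) x = 2 * e * x + η₁ t :=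
    (((hasDerivAt_pow 2 x).const_mul e).add ((hasDerivAt_id x).const_mul (η₁ t))).deriv.trans
      (by push_cast; ring)
  have hη_t (s : ℝ) : deriv (fun r => e * x ^ 2 + η₁ r * x) s = deriv η₁ s * x := by
    rw [deriv_const_add, deriv_mul_const_field]
  simp only [determiningExpr, hη_x, hη_t, deriv_const_add, deriv_mul_const_field]
  ring

section Candidate

variable (a b c₁ c₂ c₃ : ℝ)

noncomputable def η₁ (t : ℝ) : ℝ :=
  c₁ * (t ^ 3 - a ^ 2 * t) / b - (2 * b ^ 2 + 9) * c₁ * t / 9 + c₂ / 3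

noncomputable def ξ₀ (t : ℝ) : ℝ :=
  c₁ * t ^ 4 / b - 2 * c₁ * a ^ 2 * t ^ 2 / b - (2 * b ^ 2 + 9) * c₁ * t ^ 2 / 18
    + c₂ * t / 3 + c₃

theorem deriv_ξ₀ (t : ℝ) :
    deriv (ξ₀ a b c₁ c₂ c₃) t =
      4 * c₁ * t ^ 3 / b - 4 * c₁ * a ^ 2 * t / b - (2 * b ^ 2 + 9) * c₁ * t / 9 + c₂ / 3 := by
  have := (((((((hasDerivAt_pow 4 t).const_mul c₁).div_const b).sub
    (((hasDerivAt_pow 2 t).const_mul (2 * c₁ * a ^ 2)).div_const b)).sub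
    (((hasDerivAt_pow 2 t).const_mul ((2 * b ^ 2 + 9) * c₁)).div_const 18)).add
    (((hasDerivAt_id t).const_mul c₂).div_const 3)).add_const c₃)
  exact this.deriv.trans (by push_cast; ring)

theorem deriv_η₁ :
    deriv (η₁ a b c₁ c₂) =
      fun t => 3 * c₁ * t ^ 2 / b - c₁ * a ^ 2 / b - (2 * b ^ 2 + 9) * c₁ / 9 := by
  funext t
  have := (((((hasDerivAt_pow 3 t).sub ((hasDerivAt_id t).const_mul (a ^ 2))).const_mul
    c₁).div_const b).sub (((hasDerivAt_id t).const_mul ((2 * b ^ 2 + 9) * c₁)).div_const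
    9)).add_const (c₂ / 3)
  exact this.deriv.trans (by push_cast; ring)

theorem deriv_deriv_η₁ (t : ℝ) : deriv (deriv (η₁ a b c₁ c₂)) t = 6 * c₁ * t / b := by
  have := ((((hasDerivAt_pow 2 t).const_mul (3 * c₁)).div_const b).sub_const
    (c₁ * a ^ 2 / b)).sub_const ((2 * b ^ 2 + 9) * c₁ / 9)
  rw [deriv_η₁]
  exact this.deriv.trans (by push_cast; ring)

end Candidate

theorem stmt_15 (a b : ℝ) (ha : 0 < a) (hb : 0 < b) :
    ¬ ∃ (c₁ c₂ c₃ : ℝ) (ξ η : ℝ → ℝ → ℝ),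
      (∀ t x : ℝ, ξ t x = (1 / 2) * c₁ * x ^ 2 + c₁ * t ^ 4 / b
        - 2 * c₁ * a ^ 2 * t ^ 2 / b - (2 * b ^ 2 + 9) * c₁ * t ^ 2 / 18
        + c₂ * t / 3 + c₃) ∧
      (∀ t x : ℝ, η t x = -(2 * b / 3) * c₁ * x ^ 2
        + (c₁ * (t ^ 3 - a ^ 2 * t) / b - (2 * b ^ 2 + 9) * c₁ * t / 9 + c₂ / 3) * x) ∧
      (c₁, c₂, c₃) ≠ (0, 0, 0) ∧
      (∀ t x : ℝ,
        ξ t x * (a ^ 2 - 3 * t ^ 2) * x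
          + 2 * η t x * (t ^ 3 - a ^ 2 * t - x)
          + η t x * x
          + deriv (fun s => deriv (fun r => η r x) s) t * x ^ 3
          + (deriv (fun y => η t y) x - 2 * deriv (fun s => ξ s x) t)
              * (t ^ 3 - a ^ 2 * t - x) * x
          + b * deriv (fun s => η s x) t * x ^ 2 = 0) := by
  rintro ⟨c₁, c₂, c₃, ξ, η, hξ, hη, hne, hdet⟩
  obtain rfl : ξ = fun t x => 1 / 2 * c₁ * x ^ 2 + ξ₀ a b c₁ c₂ c₃ t := by
    funext t x; rw [hξ, ξ₀]; ring
  obtain rfl : η = fun t x => -(2 * b / 3) * c₁ * x ^ 2 + η₁ a b c₁ c₂ t * x := by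
    funext t x; rw [hη, η₁]
  have hcoeffs (t : ℝ) := coeffs_eq_zero_of_forall_mul_cubic_eq_zero fun x =>
    (determiningExpr_quadratic_ansatz ..).symm.trans (hdet t x)
  have hc₁ : c₁ = 0 := by
    simpa [deriv_deriv_η₁, hb.ne'] using (hcoeffs 1).2.2.2
  subst hc₁
  have hlow (t : ℝ) : c₃ * (a ^ 2 - 3 * t ^ 2) - 2 * c₂ * t ^ 3 / 3 = 0 := by
    have := (hcoeffs t).1
    rw [deriv_ξ₀, ξ₀, η₁] at this
    linear_combination this
  have hc₃ : c₃ = 0 := by simpa [ha.ne'] using hlow 0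
  have hc₂ : c₂ = 0 := by simpa [hc₃] using hlow 1
  exact hne (by rw [hc₂, hc₃])
end
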